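/- arXiv:2207.03600 — 2 statements merged into one kernel-verified Lean document; each statement's English description precedes it below -/
import Mathlib

section
/- Let T=(V,E) be a finite tree with positive edge weights and shortest-path metric d, and let e=(u,v)∈E. Consider the 2-clustering of V whose two clusters are the vertex sets of the two connected components of T∖e (so u and v lie in different clusters). If both boundary vertices u and v are IP-stable in this clustering, then every vertex x∈V is IP-stable, i.e., the clustering is IP-stable. -/
open Finset

open scoped Classical in
/-- The shortest-path (tree) metric induced on the vertices of a tree `G` with
edge weights `w`: the total weight of the unique path between two vertices. -/
noncomputable def treeDist {V : Type*} (G : SimpleGraph V) (hG : G.IsTree)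
    (w : Sym2 V → ℝ) (u v : V) : ℝ :=
  (((hG.existsUnique_path u v).exists.choose).edges.map w).sum

/-- A point `x` is IP-stable in the clustering `C` w.r.t. dissimilarity `d`. -/
def IPStablePt {α : Type*} [DecidableEq α] (d : α → α → ℝ) {k : ℕ}
    (C : Fin k → Finset α) (x : α) : Prop :=
  ∀ i : Fin k, x ∈ C i →
    (C i = {x} ∨
      ∀ j : Fin k, C j ≠ C i →
        (∑ y ∈ C i, d x y) / ((C i).card - 1 : ℝ) ≤
          (∑ y ∈ C j, d x y) / ((C j).card : ℝ))

/-!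
Let `x` lie on `u`'s side of the edge `uv`. Every path from `x` to the other side runs through
`u`, so the average distance from `x` to the other cluster is exactly `d(x,u)` plus that of `u`.
On its own cluster, the term `d(x,x)` vanishes and each of the remaining `|C| - 1` terms is at
most `d(x,u) + d(u,y)` by the triangle inequality, so the average of `x` there is at most `d(x,u)`
plus that of `u`. Hence the stability inequality of `u` shifted by `d(x,u)` yields that of `x`.
-/

open SimpleGraph

section Pivot

variable {α : Type*} [DecidableEq α] (d : α → α → ℝ)

theorem sum_div_card_sub_one_le_of_pivot {A B : Finset α} {u x : α}
    (hxA : x ∈ A) (hA : 1 < #A) (hB : B.Nonempty) (hxx : d x x = 0) (hux : 0 ≤ d u x)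
    (htri : ∀ y ∈ A, d x y ≤ d x u + d u y) (hsplit : ∀ y ∈ B, d x y = d x u + d u y)
    (hu : (∑ y ∈ A, d u y) / (#A - 1 : ℝ) ≤ (∑ y ∈ B, d u y) / #B) :
    (∑ y ∈ A, d x y) / (#A - 1 : ℝ) ≤ (∑ y ∈ B, d x y) / #B := by
  have hA' : (0 : ℝ) < #A - 1 := by
    have : (1 : ℝ) < #A := by exact_mod_cast hA
    linarith
  have hB' : (0 : ℝ) < #B := by exact_mod_cast hB.card_pos
  have hsumA : ∑ y ∈ A, d x y ≤ (#A - 1 : ℝ) * d x u + ∑ y ∈ A, d u y := calc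
    ∑ y ∈ A, d x y = ∑ y ∈ A.erase x, d x y := by rw [sum_erase_eq_sub hxA, hxx, sub_zero]
    _ ≤ ∑ y ∈ A.erase x, (d x u + d u y) :=
        sum_le_sum fun y hy => htri y (mem_of_mem_erase hy)
    _ = (#A - 1 : ℝ) * d x u + (∑ y ∈ A, d u y - d u x) := by
        rw [sum_add_distrib, sum_const, card_erase_of_mem hxA, nsmul_eq_mul,
          sum_erase_eq_sub hxA, Nat.cast_sub hA.le, Nat.cast_one]
    _ ≤ (#A - 1 : ℝ) * d x u + ∑ y ∈ A, d u y := by linarith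
  have hsumB : ∑ y ∈ B, d x y = #B * d x u + ∑ y ∈ B, d u y := by
    rw [sum_congr rfl hsplit, sum_add_distrib, sum_const, nsmul_eq_mul]
  calc (∑ y ∈ A, d x y) / (#A - 1 : ℝ) ≤ d x u + (∑ y ∈ A, d u y) / (#A - 1 : ℝ) := by
        rw [div_le_iff₀ hA', add_mul, div_mul_cancel₀ _ hA'.ne']
        linarith
    _ ≤ d x u + (∑ y ∈ B, d u y) / #B := by gcongr
    _ = (∑ y ∈ B, d x y) / #B := by rw [hsumB, add_div, mul_div_cancel_left₀ _ hB'.ne']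

end Pivot

section TreeDist

variable {V : Type*} {G : SimpleGraph V} (hG : G.IsTree) (w : Sym2 V → ℝ)

theorem treeDist_eq_of_isPath {x y : V} {p : G.Walk x y} (hp : p.IsPath) :
    treeDist G hG w x y = (p.edges.map w).sum := by
  rw [treeDist, (hG.existsUnique_path x y).unique (hG.existsUnique_path x y).exists.choose_spec hp]

theorem treeDist_self (x : V) : treeDist G hG w x x = 0 := by
  simp [treeDist_eq_of_isPath hG w Walk.IsPath.nil]

variable {w}

theorem nonneg_of_mem_map_edges (hw : ∀ e ∈ G.edgeSet, 0 < w e) {x y : V} (p : G.Walk x y) :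
    ∀ a ∈ p.edges.map w, 0 ≤ a := by
  simp only [List.mem_map, forall_exists_index, and_imp, forall_apply_eq_imp_iff₂]
  exact fun e he => (hw e (p.edges_subset_edgeSet he)).le

theorem treeDist_nonneg (hw : ∀ e ∈ G.edgeSet, 0 < w e) (x y : V) :
    0 ≤ treeDist G hG w x y :=
  List.sum_nonneg (nonneg_of_mem_map_edges hw _)

theorem treeDist_triangle (hw : ∀ e ∈ G.edgeSet, 0 < w e) (x y z : V) :
    treeDist G hG w x z ≤ treeDist G hG w x y + treeDist G hG w y z := by
  classical
  obtain ⟨p, hp, -⟩ := hG.existsUnique_path x y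
  obtain ⟨q, hq, -⟩ := hG.existsUnique_path y z
  rw [treeDist_eq_of_isPath hG w hp, treeDist_eq_of_isPath hG w hq,
    treeDist_eq_of_isPath hG w (p.append q).bypass_isPath, ← List.sum_append, ← List.map_append,
    ← Walk.edges_append]
  exact ((p.append q).edges_bypass_sublist_edges.map w).sum_le_sum
    (nonneg_of_mem_map_edges hw _)

theorem treeDist_eq_add_add_of_reachable_deleteEdges {u v x y : V} (huv : G.Adj u v)
    (hx : (G.deleteEdges {s(u, v)}).Reachable u x)
    (hy : (G.deleteEdges {s(u, v)}).Reachable v y) :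
    treeDist G hG w x y = treeDist G hG w x u + w s(u, v) + treeDist G hG w v y := by
  classical
  set G' := G.deleteEdges {s(u, v)}
  have hle : G' ≤ G := deleteEdges_le _
  have hbridge : ¬ G'.Reachable u v := isBridge_iff.1 (isAcyclic_iff_forall_adj_isBridge.1 hG.2 huv)
  obtain ⟨p, hp⟩ : ∃ p : G'.Walk x u, p.IsPath :=
    let ⟨p⟩ := hx.symm; ⟨p.bypass, p.bypass_isPath⟩
  obtain ⟨q, hq⟩ : ∃ q : G'.Walk v y, q.IsPath :=
    let ⟨q⟩ := hy; ⟨q.bypass, q.bypass_isPath⟩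
  have hpq : p.support.Disjoint q.support := by
    intro a hap haq
    exact hbridge <| (hx.trans ⟨p.takeUntil a hap⟩).trans ⟨(q.takeUntil a haq).reverse⟩
  have hW : ((p.mapLe hle).append (Walk.cons huv (q.mapLe hle))).IsPath := by
    rw [Walk.isPath_def, Walk.support_append, Walk.support_cons, List.tail_cons,
      Walk.support_mapLe_eq_support, Walk.support_mapLe_eq_support, List.nodup_append']
    exact ⟨hp.support_nodup, hq.support_nodup, hpq⟩
  rw [treeDist_eq_of_isPath hG w hW, treeDist_eq_of_isPath hG w (hp.mapLe hle),
    treeDist_eq_of_isPath hG w (hq.mapLe hle)]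
  simp only [Walk.edges_append, Walk.edges_cons, Walk.edges_mapLe_eq_edges, List.map_append,
    List.map_cons, List.sum_append, List.sum_cons]
  ring

theorem treeDist_eq_add_of_reachable_deleteEdges {u v x y : V} (huv : G.Adj u v)
    (hx : (G.deleteEdges {s(u, v)}).Reachable u x)
    (hy : (G.deleteEdges {s(u, v)}).Reachable v y) :
    treeDist G hG w x y = treeDist G hG w x u + treeDist G hG w u y := by
  rw [treeDist_eq_add_add_of_reachable_deleteEdges hG huv hx hy,
    treeDist_eq_add_add_of_reachable_deleteEdges hG huv (Reachable.refl u) hy, treeDist_self]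
  ring

end TreeDist

open scoped Classical in
theorem ipStable_of_boundary_ipStable {V : Type*} [Fintype V] [DecidableEq V]
    {G : SimpleGraph V} (hG : G.IsTree) {w : Sym2 V → ℝ} (hw : ∀ e ∈ G.edgeSet, 0 < w e)
    {u v : V} (huv : G.Adj u v) {C : Fin 2 → Finset V} {i j : Fin 2} (hij : i ≠ j)
    (hCi : C i = univ.filter fun z => (G.deleteEdges {s(u, v)}).Reachable u z)
    (hCj : C j = univ.filter fun z => (G.deleteEdges {s(u, v)}).Reachable v z)
    (hu : IPStablePt (treeDist G hG w) C u) {x : V} (hx : x ∈ C i) :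
    C i = {x} ∨ ∀ k : Fin 2, C k ≠ C i →
      (∑ y ∈ C i, treeDist G hG w x y) / (#(C i) - 1 : ℝ) ≤
        (∑ y ∈ C k, treeDist G hG w x y) / (#(C k) : ℝ) := by
  have huCi : u ∈ C i := by simp [hCi]
  have hvCj : v ∈ C j := by simp [hCj]
  rcases hu i huCi with hCu | hstab
  · obtain rfl : x = u := mem_singleton.1 (hCu ▸ hx)
    exact .inl hCu
  by_cases hsing : C i = {x}
  · exact .inl hsing
  refine .inr fun k hk => ?_
  obtain rfl : k = j := by
    have : k ≠ i := by rintro rfl; exact hk rfl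
    omega
  exact sum_div_card_sub_one_le_of_pivot _ hx
    (one_lt_card_iff_nontrivial.2 ((nontrivial_iff_ne_singleton hx).2 hsing)) ⟨v, hvCj⟩
    (treeDist_self hG w x) (treeDist_nonneg hG hw u x) (fun y _ => treeDist_triangle hG hw x u y)
    (fun y hy => treeDist_eq_add_of_reachable_deleteEdges hG huv (by simpa [hCi] using hx)
      (by simpa [hCj] using hy))
    (hstab k hk)

open scoped Classical in
/-- in a finite tree with positive edge weights, consider the
2-clustering given by the two connected components obtained by deleting an edge
`(u, v)`. If both boundary vertices `u` and `v` are IP-stable, then every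
vertex is IP-stable, i.e. the clustering is IP-stable. -/
theorem boundary_vertices_stable_implies_clustering_stable_on_tree
    {V : Type*} [Fintype V] [DecidableEq V]
    (G : SimpleGraph V) (hG : G.IsTree)
    (w : Sym2 V → ℝ) (hw : ∀ e ∈ G.edgeSet, 0 < w e)
    (u v : V) (huv : G.Adj u v)
    (C : Fin 2 → Finset V)
    (hC0 : C 0 = Finset.univ.filter fun z => (G.deleteEdges {s(u, v)}).Reachable u z)
    (hC1 : C 1 = Finset.univ.filter fun z => (G.deleteEdges {s(u, v)}).Reachable v z)
    (hu : IPStablePt (treeDist G hG w) C u)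
    (hv : IPStablePt (treeDist G hG w) C v) :
    ∀ x : V, IPStablePt (treeDist G hG w) C x := by
  intro x i hxi
  match i with
  | 0 => exact ipStable_of_boundary_ipStable hG hw huv zero_ne_one hC0 hC1 hu hxi
  | 1 =>
    rw [Sym2.eq_swap] at hC0 hC1
    exact ipStable_of_boundary_ipStable hG hw huv.symm one_ne_zero hC1 hC0 hv hxi
end

section
/- Let d be a metric on a finite set D of n points and let C=(C_1,…,C_k) be an (α,γ)-clustering of D with γ ≥ 2+√3. Then for all i≠j, all x,y∈C_i and all z∈C_j, d(x,y) ≤ d(y,z). That is, every intra-cluster distance from a point y is at most every inter-cluster distance from y. -/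
open Finset

/-- Average distance from `x` to the points of the cluster `C`
(excluding `x` itself if `x ∈ C`; note `dist x x = 0`). -/
noncomputable def avgD {α : Type*} [DecidableEq α] [MetricSpace α]
    (x : α) (C : Finset α) : ℝ :=
  (∑ y ∈ C, dist x y) / (if x ∈ C then ((C.card : ℝ) - 1) else (C.card : ℝ))

/-- `C` is a `k`-clustering of the finite set `D`: a partition of `D` into `k`
nonempty clusters. -/
def IsClustering {α : Type*} [DecidableEq α] (D : Finset α) {k : ℕ}
    (C : Fin k → Finset α) : Prop :=
  (∀ i, (C i).Nonempty) ∧ (∀ i j, i ≠ j → Disjoint (C i) (C j)) ∧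
    Finset.univ.biUnion C = D

/-- `C` is an `(a, γ)`-clustering of `D`: a `k`-clustering whose clusters all
have at least `a·|D|` points, and every point is (on average) at least a factor
`γ` closer to its own cluster than to any other cluster. -/
def IsAGClustering {α : Type*} [DecidableEq α] [MetricSpace α]
    (D : Finset α) (a γ : ℝ) {k : ℕ} (C : Fin k → Finset α) : Prop :=
  IsClustering D C ∧ (∀ i, a * (D.card : ℝ) ≤ ((C i).card : ℝ)) ∧
    (∀ i j, i ≠ j → ∀ x ∈ C i, γ * avgD x (C i) ≤ avgD x (C j))

lemma avgD_nonneg {α : Type*} [DecidableEq α] [MetricSpace α]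
    (x : α) (C : Finset α) : 0 ≤ avgD x C := by
  unfold avgD
  apply div_nonneg (Finset.sum_nonneg fun _ _ => dist_nonneg)
  split
  · have : 1 ≤ C.card := Finset.card_pos.mpr ⟨x, ‹_›⟩
    have : (1:ℝ) ≤ (C.card:ℝ) := by exact_mod_cast this
    linarith
  · positivity

lemma sum_dist_mem {α : Type*} [DecidableEq α] [MetricSpace α]
    {x : α} {C : Finset α} (hx : x ∈ C) :
    ∑ w ∈ C, dist x w = ((C.card : ℝ) - 1) * avgD x C := by
  unfold avgD
  rw [if_pos hx]
  rcases eq_or_ne ((C.card:ℝ) - 1) 0 with h | h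
  · rw [h, zero_mul]
    have hc : C.card = 1 := by
      have : (C.card:ℝ) = 1 := by linarith
      exact_mod_cast this
    obtain ⟨a, ha⟩ := Finset.card_eq_one.mp hc
    have hxa : x = a := by rw [ha] at hx; simpa using hx
    rw [ha, Finset.sum_singleton, ← hxa, dist_self]
  · rw [mul_comm, div_mul_cancel₀ _ h]

lemma sum_dist_not_mem {α : Type*} [DecidableEq α] [MetricSpace α]
    {x : α} {C : Finset α} (hx : x ∉ C) :
    ∑ w ∈ C, dist x w = (C.card : ℝ) * avgD x C := by
  unfold avgD
  rw [if_neg hx]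
  rcases eq_or_ne ((C.card:ℝ)) 0 with h | h
  · rw [h, zero_mul]
    have hc : C.card = 0 := by exact_mod_cast h
    rw [Finset.card_eq_zero.mp hc, Finset.sum_empty]
  · rw [mul_comm, div_mul_cancel₀ _ h]

lemma card_mul_dist_le {α : Type*} [MetricSpace α] (u v : α) (S : Finset α) :
    (S.card : ℝ) * dist u v ≤ (∑ w ∈ S, dist u w) + (∑ w ∈ S, dist v w) := by
  calc (S.card:ℝ) * dist u v = ∑ _w ∈ S, dist u v := by
        rw [Finset.sum_const, nsmul_eq_mul]
    _ ≤ ∑ w ∈ S, (dist u w + dist v w) :=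
        Finset.sum_le_sum fun w _ => by
          have := dist_triangle u w v
          rw [dist_comm w v] at this
          linarith
    _ = _ := Finset.sum_add_distrib

lemma sum_shift {α : Type*} [MetricSpace α] (u v : α) (S : Finset α) :
    ∑ w ∈ S, dist u w ≤ (S.card : ℝ) * dist u v + ∑ w ∈ S, dist v w := by
  have h : ∑ w ∈ S, dist u w ≤ ∑ w ∈ S, (dist u v + dist v w) :=
    Finset.sum_le_sum fun w _ => dist_triangle u v w
  rw [Finset.sum_add_distrib, Finset.sum_const, nsmul_eq_mul] at h
  exact h

set_option maxHeartbeats 1000000 in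
/-- in an `(a, γ)`-clustering with `γ ≥ 2 + √3`, every
intra-cluster distance from a point `y` is at most every inter-cluster distance
from `y`: for `x, y ∈ C i` and `z ∈ C j` with `i ≠ j`, `d(x, y) ≤ d(y, z)`. -/
theorem ag_clustering_intra_le_inter
    {α : Type*} [DecidableEq α] [MetricSpace α]
    (D : Finset α) (a γ : ℝ) (hγ : 2 + Real.sqrt 3 ≤ γ)
    {k : ℕ} (C : Fin k → Finset α) (hC : IsAGClustering D a γ C)
    (i j : Fin k) (hij : i ≠ j)
    (x : α) (hx : x ∈ C i) (y : α) (hy : y ∈ C i) (z : α) (hz : z ∈ C j) :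
    dist x y ≤ dist y z := by
  obtain ⟨⟨hne, hdisj, -⟩, -, hsep⟩ := hC
  -- basic facts about γ
  have hs3 : Real.sqrt 3 ^ 2 = 3 := Real.sq_sqrt (by norm_num)
  have hs0 : (0:ℝ) ≤ Real.sqrt 3 := Real.sqrt_nonneg 3
  have hγ2 : (2:ℝ) ≤ γ := by linarith
  have hγnn : (0:ℝ) ≤ γ := by linarith
  have hquad : 2 * γ ≤ (γ - 1) ^ 2 := by
    nlinarith [mul_nonneg hs0 (by linarith : (0:ℝ) ≤ γ - 2 - Real.sqrt 3),
      sq_nonneg (γ - 2 - Real.sqrt 3)]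
  -- memberships
  have hxj : x ∉ C j := Finset.disjoint_left.mp (hdisj i j hij) hx
  have hyj : y ∉ C j := Finset.disjoint_left.mp (hdisj i j hij) hy
  have hzi : z ∉ C i := Finset.disjoint_left.mp (hdisj j i hij.symm) hz
  -- abbreviations
  set ax := avgD x (C i) with hax_def
  set ay := avgD y (C i) with hay_def
  set az := avgD z (C j) with haz_def
  set bx := avgD x (C j) with hbx_def
  set by' := avgD y (C j) with hby_def
  set czi := avgD z (C i) with hczi_def
  set e := dist x y with he_def
  set d := dist y z with hd_def
  have hax0 : 0 ≤ ax := avgD_nonneg x (C i)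
  have hay0 : 0 ≤ ay := avgD_nonneg y (C i)
  have haz0 : 0 ≤ az := avgD_nonneg z (C j)
  have hd0 : 0 ≤ d := dist_nonneg
  set m := ((C i).card : ℝ) with hm_def
  set n := ((C j).card : ℝ) with hn_def
  have hm1 : (1:ℝ) ≤ m := by
    have h : 1 ≤ (C i).card := Finset.card_pos.mpr (hne i)
    rw [hm_def]; exact_mod_cast h
  have hn1 : (1:ℝ) ≤ n := by
    have h : 1 ≤ (C j).card := Finset.card_pos.mpr (hne j)
    rw [hn_def]; exact_mod_cast h
  -- I1 : e ≤ ax + ay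
  have I1 : e ≤ ax + ay := by
    have h := card_mul_dist_le x y (C i)
    rw [sum_dist_mem hx, sum_dist_mem hy, ← hax_def, ← hay_def, ← hm_def, ← he_def] at h
    nlinarith [h, hm1, hax0, hay0]
  -- I2 : bx ≤ e + by'
  have I2 : bx ≤ e + by' := by
    have h := sum_shift x y (C j)
    rw [sum_dist_not_mem hxj, sum_dist_not_mem hyj, ← hbx_def, ← hby_def, ← hn_def,
      ← he_def] at h
    nlinarith [h, hn1]
  -- I3 : by' ≤ d + az
  have I3 : by' ≤ d + az := by
    have h := sum_shift y z (C j)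
    rw [sum_dist_not_mem hyj, sum_dist_mem hz, ← hby_def, ← haz_def, ← hn_def,
      ← hd_def] at h
    nlinarith [h, hn1, haz0]
  -- I4 : czi ≤ d + ay
  have I4 : czi ≤ d + ay := by
    have h := sum_shift z y (C i)
    rw [sum_dist_not_mem hzi, sum_dist_mem hy, ← hczi_def, ← hay_def, ← hm_def,
      dist_comm z y, ← hd_def] at h
    nlinarith [h, hm1, hay0]
  -- separation conditions
  have h5 : γ * ax ≤ bx := hsep i j hij x hx
  have h6 : γ * ay ≤ by' := hsep i j hij y hy
  have h7 : γ * az ≤ czi := hsep j i hij.symm z hz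
  -- algebra
  have hA : γ * ay ≤ d + az := h6.trans I3
  have hB : γ * az ≤ d + ay := h7.trans I4
  have key : (γ + 1) * ((γ - 1) * ay) ≤ (γ + 1) * d := by
    linarith [mul_le_mul_of_nonneg_left hA hγnn, hB]
  have hay : (γ - 1) * ay ≤ d := le_of_mul_le_mul_left key (by linarith)
  have hAx : γ * ax ≤ e + d + az := by linarith
  have key2 : γ * (γ * ax) ≤ γ * (e + d + az) := mul_le_mul_of_nonneg_left hAx hγnn
  have h8 : (γ * γ - γ) * e ≤ (γ + 1) * d + (γ * γ + 1) * ay := by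
    linarith [key2, hB, mul_le_mul_of_nonneg_left I1 (mul_nonneg hγnn hγnn)]
  have h9 : (γ - 1) * ((γ * γ - γ) * e) ≤ (γ - 1) * ((γ + 1) * d + (γ * γ + 1) * ay) :=
    mul_le_mul_of_nonneg_left h8 (by linarith)
  have h10 : (γ * γ + 1) * ((γ - 1) * ay) ≤ (γ * γ + 1) * d :=
    mul_le_mul_of_nonneg_left hay (by nlinarith)
  have h11 : (γ * (γ - 1) ^ 2) * e ≤ (γ * (γ - 1) ^ 2) * d := by
    linarith [h9, h10, mul_le_mul_of_nonneg_left hquad (mul_nonneg hγnn hd0)]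
  exact le_of_mul_le_mul_left h11 (by nlinarith)
end
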